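/- Fix s ≥ 3 and a relation Γ ⊆ ℕ × ℕ which is the graph of a function on ℕ∖{0}, and suppose (x_1,x_2) ∈ Γ ⟺ ∃ x_3,…,x_s ∈ ℕ, Φ(x_1,…,x_s), where Φ is a conjunction of equations of the forms x_k = 1, x_i + x_j = x_k, x_i · x_j = x_k. Then for every integer n ≥ 6 + 2s there exists a system S_n ⊆ E_n in n variables such that S_n has a solution in non-negative integers, and every solution (x_1,…,x_n) of S_n contains a coordinate equal to Γ(n) + 1; consequently f(n) ≥ Γ(n) + 1. -/

import Mathlib

/-!
The chain `t_1 = 1`, `t_{i+1} = t_i + t_1` forces `t_i = i`, hence `w = 2⌊n/2⌋`; the equation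
on `y` forces `y = n mod 2`, so `x_1 = w + y = n`. Then `Φ` forces `x_2 = Γ(n)` and `u = Γ(n) + 1`.
Conversely, these values together with a witness of `Γ(n)` for `Φ` solve `S_n`. As the solvable
system `S_n` has no solution avoiding the value `Γ(n) + 1`, no bound below `Γ(n) + 1` works.
-/

/-- An equation from `E_n`: `x_k = 1`, `x_i + x_j = x_k`, or `x_i * x_j = x_k`. -/
inductive Eqn (n : ℕ) : Type where
  | one (k : Fin n)
  | add (i j k : Fin n)
  | mul (i j k : Fin n)

def Eqn.holds {n : ℕ} (x : Fin n → ℕ) : Eqn n → Prop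
  | .one k => x k = 1
  | .add i j k => x i + x j = x k
  | .mul i j k => x i * x j = x k

/-- `x` solves the system `S ⊆ E_n`. -/
def Solves {n : ℕ} (x : Fin n → ℕ) (S : Set (Eqn n)) : Prop :=
  ∀ e ∈ S, e.holds x

/-- Every solvable system `S ⊆ E_n` has a solution with all values `≤ b`. -/
def IsBound (n b : ℕ) : Prop :=
  ∀ S : Set (Eqn n), (∃ x, Solves x S) → ∃ x, Solves x S ∧ ∀ i, x i ≤ b

/-- `f n` is the smallest such bound. -/
noncomputable def f (n : ℕ) : ℕ := sInf {b | IsBound n b}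

/-- `y` is a duplicate of `x`. -/
def Dup {n : ℕ} (x y : Fin n → ℕ) : Prop :=
  (∀ k, x k = 1 → y k = 1) ∧
  (∀ i j k, x i + x j = x k → y i + y j = y k) ∧
  (∀ i j k, x i * x j = x k → y i * y j = y k)

/-- Every `x : ℕⁿ` has a duplicate in `{0,…,b}ⁿ`. -/
def DupBound (n b : ℕ) : Prop :=
  ∀ x : Fin n → ℕ, ∃ y, Dup x y ∧ ∀ i, y i ≤ b

/-- `f` expressed via duplicates. -/
noncomputable def fdup (n : ℕ) : ℕ := sInf {b | DupBound n b}

/-- `g n m` : smallest `b` such that every `x ∈ {0,…,m-1}ⁿ` has a duplicate in `{0,…,b}ⁿ`. -/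
noncomputable def g (n m : ℕ) : ℕ :=
  sInf {b | ∀ x : Fin n → ℕ, (∀ i, x i < m) → ∃ y, Dup x y ∧ ∀ i, y i ≤ b}

instance (n : ℕ) : Finite (Eqn n) :=
  Finite.of_injective
    (fun e : Eqn n => match e with
      | .one k => ((0 : Fin 3), k, k, k)
      | .add i j k => (1, i, j, k)
      | .mul i j k => (2, i, j, k))
    (by intro a b h; cases a <;> cases b <;> simp_all)

lemma exists_isBound (n : ℕ) : ∃ b, IsBound n b := by
  classical
  let sol : Set (Eqn n) → Fin n → ℕ := fun S =>
    if h : ∃ x, Solves x S then h.choose else 0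
  obtain ⟨b, hb⟩ := (Set.finite_range fun S => Finset.univ.sup (sol S)).bddAbove
  refine ⟨b, fun S hS => ⟨sol S, ?_, fun i => ?_⟩⟩
  · simpa only [sol, dif_pos hS] using hS.choose_spec
  · exact (Finset.le_sup (Finset.mem_univ i)).trans (hb (Set.mem_range_self S))

lemma le_f_of_forall_solves {n c : ℕ} {S : Set (Eqn n)} (hS : ∃ x, Solves x S)
    (hc : ∀ x, Solves x S → ∃ i, x i = c) : c ≤ f n := by
  refine le_csInf (exists_isBound n) fun b hb => ?_
  obtain ⟨x, hx, hxb⟩ := hb S hS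
  obtain ⟨i, rfl⟩ := hc x hx
  exact hxb i

def Eqn.map {n N : ℕ} (φ : Fin n → Fin N) : Eqn n → Eqn N
  | .one k => .one (φ k)
  | .add i j k => .add (φ i) (φ j) (φ k)
  | .mul i j k => .mul (φ i) (φ j) (φ k)

lemma Eqn.holds_map {n N : ℕ} (φ : Fin n → Fin N) (x : Fin N → ℕ) (e : Eqn n) :
    (e.map φ).holds x ↔ e.holds (x ∘ φ) := by
  cases e <;> rfl

lemma eq_succ_of_chain {k : ℕ} (v : Fin (k + 1) → ℕ) (h0 : v 0 = 1)
    (hstep : ∀ i : Fin k, v i.castSucc + v 0 = v i.succ) (i : Fin (k + 1)) :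
    v i = i + 1 := by
  induction i using Fin.induction with
  | zero => exact h0
  | succ i ih => rw [← hstep, ih, h0]; simp

/-- The named variables of `S_n`; `t i` is the paper's `t_{i+1}`. -/
inductive Var (s k : ℕ)
  | x (i : Fin (s + 3))
  | t (i : Fin (k + 1))
  | w
  | y
  | u

namespace Var

variable {s k n : ℕ}

/-- The positions outside the range of `pos` are the paper's `z_i`, left unconstrained. -/
def pos (h : s + k + 7 ≤ n) : Var s k → Fin n
  | x i => ⟨i, by omega⟩
  | t i => ⟨s + 3 + i, by omega⟩
  | w => ⟨s + k + 4, by omega⟩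
  | y => ⟨s + k + 5, by omega⟩
  | u => ⟨s + k + 6, by omega⟩

lemma pos_injective (h : s + k + 7 ≤ n) : Function.Injective (pos h) := by
  intro a b hab
  cases a <;> cases b <;> simp_all [pos, Fin.ext_iff] <;> omega

end Var

open Var

def parityEqn {N : ℕ} (n : ℕ) (y : Fin N) : Eqn N :=
  if n % 2 = 0 then .add y y y else .one y

lemma parityEqn_holds_iff {N : ℕ} (n : ℕ) (y : Fin N) (v : Fin N → ℕ) :
    (parityEqn n y).holds v ↔ v y = n % 2 := by
  unfold parityEqn
  split_ifs <;> simp only [Eqn.holds] <;> omega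

/-- The paper's `S_n` when `k + 1 = ⌊n/2⌋`. -/
def system (s n k : ℕ) (h : s + k + 7 ≤ n) (Φ : Set (Eqn (s + 3))) : Set (Eqn n) :=
  let p := pos h
  Eqn.map (p ∘ x) '' Φ ∪
    Set.range (fun i : Fin k => Eqn.add (p (t i.castSucc)) (p (t 0)) (p (t i.succ))) ∪
    {.one (p (t 0)), .add (p (t (Fin.last k))) (p (t (Fin.last k))) (p w), parityEqn n (p y),
      .add (p w) (p y) (p (x 0)), .add (p (x 1)) (p (t 0)) (p u)}

lemma solves_system_iff {s n k : ℕ} (h : s + k + 7 ≤ n) (Φ : Set (Eqn (s + 3)))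
    (v : Fin n → ℕ) :
    Solves v (system s n k h Φ) ↔
      Solves (v ∘ pos h ∘ x) Φ ∧
      (∀ i : Fin k, v (pos h (t i.castSucc)) + v (pos h (t 0)) = v (pos h (t i.succ))) ∧
      v (pos h (t 0)) = 1 ∧
      v (pos h (t (Fin.last k))) + v (pos h (t (Fin.last k))) = v (pos h w) ∧
      v (pos h y) = n % 2 ∧
      v (pos h w) + v (pos h y) = v (pos h (x 0)) ∧
      v (pos h (x 1)) + v (pos h (t 0)) = v (pos h u) := by
  simp only [system, Solves, Set.mem_union, or_imp, forall_and, Set.forall_mem_image,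
    Set.forall_mem_range, Set.forall_mem_insert, Set.mem_singleton_iff, forall_eq,
    Eqn.holds_map, parityEqn_holds_iff, and_assoc]
  rfl

lemma solves_system_x_zero {s n k : ℕ} {h : s + k + 7 ≤ n} {Φ : Set (Eqn (s + 3))}
    (hk : 2 * (k + 1) + n % 2 = n) {v : Fin n → ℕ} (hv : Solves v (system s n k h Φ)) :
    v (pos h (x 0)) = n := by
  obtain ⟨-, hstep, ht0, hw, hy, hx0, -⟩ := (solves_system_iff h Φ v).1 hv
  have ht := eq_succ_of_chain (fun i => v (pos h (t i))) ht0 hstep (Fin.last k)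
  simp only [Fin.val_last] at ht
  omega

def assignment (s k n : ℕ) (x' : Fin (s + 3) → ℕ) : Var s k → ℕ
  | x i => x' i
  | t i => i + 1
  | w => 2 * (k + 1)
  | y => n % 2
  | u => x' 1 + 1

lemma exists_solves_system {s n k : ℕ} (h : s + k + 7 ≤ n) {Φ : Set (Eqn (s + 3))}
    (hk : 2 * (k + 1) + n % 2 = n) {x' : Fin (s + 3) → ℕ} (hx' : Solves x' Φ)
    (hx'0 : x' 0 = n) : ∃ v, Solves v (system s n k h Φ) := by
  refine ⟨Function.extend (pos h) (assignment s k n x') 0, (solves_system_iff h Φ _).2 ?_⟩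
  simp only [(pos_injective h).extend_apply, Function.comp_def]
  refine ⟨hx', ?_, ?_, ?_, rfl, ?_, rfl⟩ <;> simp [assignment] <;> omega

theorem stmt13 (s : ℕ) (Γ : ℕ → ℕ) (Φ : Set (Eqn (s + 3)))
    (hrep : ∀ x1 x2 : ℕ, 0 < x1 →
      (Γ x1 = x2 ↔ ∃ x : Fin (s + 3) → ℕ,
        x ⟨0, by omega⟩ = x1 ∧ x ⟨1, by omega⟩ = x2 ∧ Solves x Φ)) :
    ∀ n : ℕ, 6 + 2 * (s + 3) ≤ n →
      (∃ S : Set (Eqn n), (∃ x, Solves x S) ∧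
        ∀ x : Fin n → ℕ, Solves x S → ∃ i, x i = Γ n + 1) ∧
      Γ n + 1 ≤ f n := by
  intro n hn
  have h : s + (n / 2 - 1) + 7 ≤ n := by omega
  have hk : 2 * (n / 2 - 1 + 1) + n % 2 = n := by omega
  have hsolvable : ∃ v, Solves v (system s n _ h Φ) := by
    obtain ⟨x', hx'0, -, hx'Φ⟩ := (hrep n (Γ n) (by omega)).1 rfl
    exact exists_solves_system h hk hx'Φ hx'0
  have hforced : ∀ v, Solves v (system s n _ h Φ) → ∃ i, v i = Γ n + 1 := by
    intro v hv
    obtain ⟨hΦ, -, ht0, -, -, -, hu⟩ := (solves_system_iff h Φ v).1 hv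
    have hΓ : Γ n = v (pos h (x 1)) :=
      (hrep n _ (by omega)).2 ⟨_, solves_system_x_zero hk hv, rfl, hΦ⟩
    exact ⟨pos h u, by rw [← hu, ht0, hΓ]⟩
  exact ⟨⟨_, hsolvable, hforced⟩, le_f_of_forall_solves hsolvable hforced⟩
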